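/- Let d ≥ 1, T > 0 and N > 0. Then there exists u₀ ∈ L²(ℝ^d) such that the heat solution u(t,x) = (4πt)^{−d/2} ∫_{ℝ^d} e^{−|x−y|²/(4t)} u₀(y) dy satisfies u(T, n/N) = 0 for every n ∈ ℤ^d, while ‖u(T,·)‖_{L²(ℝ^d)} > 0. In particular, the inequality ∫_{ℝ^d} |u(T,x)|² dx ≤ N^{−d} Σ_{n ∈ ℤ^d} |u(T, n/N)|² fails for this initial datum. -/

import Mathlib

open Real MeasureTheory

/-- The solution of the heat equation on `ℝ^d` with initial datum `u₀`, given by convolution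
with the Gaussian heat kernel. -/
noncomputable def heatSolution (d : ℕ) (u₀ : EuclideanSpace ℝ (Fin d) → ℝ)
    (t : ℝ) (x : EuclideanSpace ℝ (Fin d)) : ℝ :=
  (4 * Real.pi * t) ^ (-(d : ℝ) / 2) * ∫ y, Real.exp (-‖x - y‖ ^ 2 / (4 * t)) * u₀ y

/-!
Take `u₀(y) = e^{-|y|²/(4T)} sin ⟪2w, y⟫`. The substitution `y = z + x/2` splits the heat
kernel times the Gaussian factor of `u₀` into `e^{-|x|²/(8T)} e^{-|z|²/(2T)}`, and the
remaining `z`-integral is the Fourier transform of a Gaussian; hence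
`u(T, x) = C e^{-|x|²/(8T)} sin ⟪w, x⟫` with `C > 0`. For `w = πN e₀` the sine vanishes on
`ℤ^d / N`, whereas `u(T, ·)` is a continuous, square-integrable function that is nonzero at
`e₀ / (2N)`, so its `L²` norm is positive and the sampled sum on the right is zero.
-/

open scoped RealInnerProductSpace

section GaussianWave

variable {V : Type*} [NormedAddCommGroup V] [InnerProductSpace ℝ V]

noncomputable def gaussianWave (b : ℝ) (w v : V) : ℝ :=
  exp (-b * ‖v‖ ^ 2) * sin ⟪w, v⟫

@[fun_prop]
lemma continuous_gaussianWave (b : ℝ) (w : V) : Continuous (gaussianWave b w) := by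
  unfold gaussianWave; fun_prop

lemma gaussianWave_eq_zero_iff {b : ℝ} {w v : V} : gaussianWave b w v = 0 ↔ sin ⟪w, v⟫ = 0 := by
  simp [gaussianWave, exp_ne_zero]

variable [FiniteDimensional ℝ V] [MeasurableSpace V] [BorelSpace V]

lemma integrable_exp_neg_mul_sq_norm {b : ℝ} (hb : 0 < b) :
    Integrable (fun v : V => exp (-b * ‖v‖ ^ 2)) :=
  Integrable.of_integral_ne_zero <| by
    rw [GaussianFourier.integral_rexp_neg_mul_sq_norm hb]; positivity

lemma memLp_two_exp_neg_mul_sq_norm {b : ℝ} (hb : 0 < b) :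
    MemLp (fun v : V => exp (-b * ‖v‖ ^ 2)) 2 := by
  rw [memLp_two_iff_integrable_sq (by fun_prop)]
  refine (integrable_exp_neg_mul_sq_norm (V := V) (mul_pos two_pos hb)).congr
    (ae_of_all _ fun v => ?_)
  simp only [← exp_nat_mul]
  ring_nf

lemma memLp_two_gaussianWave {b : ℝ} (hb : 0 < b) (w : V) : MemLp (gaussianWave b w) 2 :=
  (memLp_two_exp_neg_mul_sq_norm hb).of_le (continuous_gaussianWave b w).aestronglyMeasurable <|
    ae_of_all _ fun v => by
      simpa [gaussianWave, abs_mul] using mul_le_of_le_one_right (exp_pos _).le (abs_sin_le_one _)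

lemma integral_exp_neg_mul_sq_norm_mul_sin_inner_add {b : ℝ} (hb : 0 < b) (w : V) (θ : ℝ) :
    ∫ v, exp (-b * ‖v‖ ^ 2) * sin (⟪w, v⟫ + θ)
      = (π / b) ^ ((Module.finrank ℝ V : ℝ) / 2) * exp (-‖w‖ ^ 2 / (4 * b)) * sin θ := by
  have hb' : 0 < (b : ℂ).re := by simpa using hb
  set F : V → ℂ := fun v => Complex.exp (-b * ‖v‖ ^ 2 + Complex.I * ⟪w, v⟫) *
    Complex.exp (θ * Complex.I)
  have hF : ∀ v, (F v).im = exp (-b * ‖v‖ ^ 2) * sin (⟪w, v⟫ + θ) := fun v => by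
    simp only [F, ← Complex.exp_add, Complex.exp_im]
    simp [← Complex.ofReal_pow]
  have hpow : ((π : ℂ) / b) ^ ((Module.finrank ℝ V : ℂ) / 2)
      = (((π / b) ^ ((Module.finrank ℝ V : ℝ) / 2) : ℝ) : ℂ) := by
    rw [Complex.ofReal_cpow (by positivity)]; push_cast; rfl
  have hexp : Complex.I ^ 2 * (‖w‖ : ℂ) ^ 2 / (4 * b) = ((-‖w‖ ^ 2 / (4 * b) : ℝ) : ℂ) := by
    push_cast; rw [Complex.I_sq]; ring
  calc ∫ v, exp (-b * ‖v‖ ^ 2) * sin (⟪w, v⟫ + θ) = (∫ v, F v).im := by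
        simp_rw [← hF]
        exact integral_im ((GaussianFourier.integrable_cexp_neg_mul_sq_norm_add hb' _ w).mul_const _)
    _ = _ := by
        rw [integral_mul_const, GaussianFourier.integral_cexp_neg_mul_sq_norm_add hb', hpow, hexp,
          mul_assoc, Complex.im_ofReal_mul, ← Complex.exp_add, Complex.exp_im]
        simp only [Complex.add_re, Complex.add_im, Complex.ofReal_re, Complex.ofReal_im,
          Complex.mul_re, Complex.mul_im, Complex.I_re, Complex.I_im]
        ring_nf

lemma integral_exp_neg_sq_norm_sub_mul_gaussianWave {T : ℝ} (hT : 0 < T) (w x : V) :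
    ∫ y, exp (-‖x - y‖ ^ 2 / (4 * T)) * gaussianWave (4 * T)⁻¹ ((2 : ℝ) • w) y
      = (2 * π * T) ^ ((Module.finrank ℝ V : ℝ) / 2) * exp (-2 * T * ‖w‖ ^ 2) *
          gaussianWave (8 * T)⁻¹ w x := by
  rw [← integral_add_right_eq_self _ ((2 : ℝ)⁻¹ • x)]
  have hshift : ∀ z : V, exp (-‖x - (z + (2 : ℝ)⁻¹ • x)‖ ^ 2 / (4 * T)) *
      gaussianWave (4 * T)⁻¹ ((2 : ℝ) • w) (z + (2 : ℝ)⁻¹ • x)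
      = exp (-(8 * T)⁻¹ * ‖x‖ ^ 2) *
          (exp (-(2 * T)⁻¹ * ‖z‖ ^ 2) * sin (⟪(2 : ℝ) • w, z⟫ + ⟪w, x⟫)) := by
    intro z
    have hnorm : -‖x - (z + (2 : ℝ)⁻¹ • x)‖ ^ 2 / (4 * T) + -(4 * T)⁻¹ * ‖z + (2 : ℝ)⁻¹ • x‖ ^ 2
        = -(8 * T)⁻¹ * ‖x‖ ^ 2 + -(2 * T)⁻¹ * ‖z‖ ^ 2 := by
      rw [show x - (z + (2 : ℝ)⁻¹ • x) = (2 : ℝ)⁻¹ • x - z by module, norm_sub_sq_real,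
        norm_add_sq_real, real_inner_comm z, norm_smul]
      field_simp
      norm_num
      ring
    have hinner : ⟪(2 : ℝ) • w, z + (2 : ℝ)⁻¹ • x⟫ = ⟪(2 : ℝ) • w, z⟫ + ⟪w, x⟫ := by
      simp only [inner_add_right, real_inner_smul_left, real_inner_smul_right]
      ring
    rw [gaussianWave, ← mul_assoc, ← exp_add, hnorm, hinner, exp_add, mul_assoc]
  simp_rw [hshift, integral_const_mul,
    integral_exp_neg_mul_sq_norm_mul_sin_inner_add (inv_pos.2 (mul_pos two_pos hT))]
  have hvol : π / (2 * T)⁻¹ = 2 * π * T := by rw [div_inv_eq_mul]; ring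
  have hdecay : -‖(2 : ℝ) • w‖ ^ 2 / (4 * (2 * T)⁻¹) = -2 * T * ‖w‖ ^ 2 := by
    rw [norm_smul]; field_simp; norm_num; ring
  rw [hvol, hdecay, gaussianWave]
  ring

end GaussianWave

lemma heatSolution_gaussianWave (d : ℕ) {T : ℝ} (hT : 0 < T) (w x : EuclideanSpace ℝ (Fin d)) :
    heatSolution d (gaussianWave (4 * T)⁻¹ ((2 : ℝ) • w)) T x
      = (4 * π * T) ^ (-(d : ℝ) / 2) * ((2 * π * T) ^ ((d : ℝ) / 2) * exp (-2 * T * ‖w‖ ^ 2))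
          * gaussianWave (8 * T)⁻¹ w x := by
  rw [heatSolution, integral_exp_neg_sq_norm_sub_mul_gaussianWave hT, finrank_euclideanSpace_fin]
  ring

theorem heat_lattice_observability_fails
    (d : ℕ) (hd : 1 ≤ d) (T N : ℝ) (hT : 0 < T) (hN : 0 < N) :
    ∃ u₀ : EuclideanSpace ℝ (Fin d) → ℝ,
      MemLp u₀ 2 (volume : Measure (EuclideanSpace ℝ (Fin d))) ∧
      (∀ n : Fin d → ℤ,
        heatSolution d u₀ T (show EuclideanSpace ℝ (Fin d) from WithLp.toLp 2 fun i => (n i : ℝ) / N) = 0) ∧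
      0 < ∫ x, |heatSolution d u₀ T x| ^ 2 ∧
      ¬ ((∫ x, |heatSolution d u₀ T x| ^ 2) ≤
          N ^ (-(d : ℤ)) *
            ∑' n : Fin d → ℤ,
              |heatSolution d u₀ T (show EuclideanSpace ℝ (Fin d) from WithLp.toLp 2 fun i => (n i : ℝ) / N)| ^ 2) := by
  set i : Fin d := ⟨0, hd⟩
  set w : EuclideanSpace ℝ (Fin d) := EuclideanSpace.single i (π * N)
  set C := (4 * π * T) ^ (-(d : ℝ) / 2) * ((2 * π * T) ^ ((d : ℝ) / 2) * exp (-2 * T * ‖w‖ ^ 2))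
  have hC : 0 < C := by positivity
  set u₀ := gaussianWave (4 * T)⁻¹ ((2 : ℝ) • w)
  have hu : heatSolution d u₀ T = fun x => C * gaussianWave (8 * T)⁻¹ w x :=
    funext (heatSolution_gaussianWave d hT w)
  have hlattice : ∀ n : Fin d → ℤ, heatSolution d u₀ T
      (show EuclideanSpace ℝ (Fin d) from WithLp.toLp 2 fun i => (n i : ℝ) / N) = 0 := by
    intro n
    rw [hu, mul_eq_zero, gaussianWave_eq_zero_iff]
    right
    convert sin_int_mul_pi (n i) using 2
    rw [EuclideanSpace.inner_single_left, conj_trivial]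
    field_simp
  have hpos : 0 < ∫ x, |heatSolution d u₀ T x| ^ 2 := by
    rw [hu]
    refine integral_pos_of_integrable_nonneg_nonzero (x := EuclideanSpace.single i (2 * N)⁻¹)
      (by fun_prop) ?_ (fun x => by positivity) ?_
    · simpa only [sq_abs] using ((memLp_two_gaussianWave (by positivity) w).const_mul C).integrable_sq
    · have hpeak : ⟪w, EuclideanSpace.single i (2 * N)⁻¹⟫ = π / 2 := by
        rw [EuclideanSpace.inner_single_left, conj_trivial, PiLp.single_eq_same]
        field_simp
      refine pow_ne_zero 2 (abs_ne_zero.2 (mul_ne_zero hC.ne' ?_))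
      rw [Ne, gaussianWave_eq_zero_iff, hpeak, sin_pi_div_two]
      exact one_ne_zero
  exact ⟨u₀, memLp_two_gaussianWave (by positivity) _, hlattice, hpos,
    by simpa [hlattice] using hpos⟩
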